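/- Every mixed stabilizer state has stabilizer norm at most one: if ρ_C = Σ_i p_i |ψ_i⟩⟨ψ_i| is a finite convex combination (p_i ≥ 0, Σ_i p_i = 1) of pure stabilizer states |ψ_i⟩ on n qubits, then D(ρ_C) ≤ 1, i.e. ln D(ρ_C) ≤ 0. -/

import Mathlib

open Matrix Complex BigOperators
open scoped ComplexOrder

noncomputable section

/-- Index type for `n` qubits: functions `Fin n → Fin 2` (cardinality `2^n`). -/
abbrev QIdx (n : ℕ) := Fin n → Fin 2

/-- The four single-qubit Pauli matrices: `σ⁰ = I`, `σ¹ = σˣ`, `σ² = σᶻ`, `σ³ = σʸ`. -/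
def pauliMat : Fin 4 → Matrix (Fin 2) (Fin 2) ℂ
  | 0 => 1
  | 1 => !![0, 1; 1, 0]
  | 2 => !![1, 0; 0, -1]
  | 3 => !![0, -Complex.I; Complex.I, 0]

/-- The Pauli string `σ^{a_1} ⊗ ⋯ ⊗ σ^{a_n}` as a `2^n × 2^n` matrix. -/
def pauliString {n : ℕ} (a : Fin n → Fin 4) : Matrix (QIdx n) (QIdx n) ℂ :=
  fun i j => ∏ k, pauliMat (a k) (i k) (j k)

/-- An `n`-qubit state: positive semidefinite with unit trace. -/
def IsState {n : ℕ} (ρ : Matrix (QIdx n) (QIdx n) ℂ) : Prop :=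
  ρ.PosSemidef ∧ ρ.trace = 1

/-- The `α`-moment of the Pauli spectrum `A_α(ρ) = 2^{-n} ∑_P |tr(ρP)|^{2α}`. -/
def Amom {n : ℕ} (α : ℝ) (ρ : Matrix (QIdx n) (QIdx n) ℂ) : ℝ :=
  ((2:ℝ)^n)⁻¹ * ∑ a : Fin n → Fin 4, (‖(ρ * pauliString a).trace‖) ^ (2 * α)

/-- The 2-Rényi entropy `S₂(ρ) = -ln tr(ρ²)`. -/
def S2 {n : ℕ} (ρ : Matrix (QIdx n) (QIdx n) ℂ) : ℝ :=
  - Real.log ((ρ * ρ).trace.re)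

/-- The magic witness `W_α(ρ) = (1/(1-α)) ln A_α(ρ) - ((1-2α)/(1-α)) S₂(ρ)`. -/
def Wit {n : ℕ} (α : ℝ) (ρ : Matrix (QIdx n) (QIdx n) ℂ) : ℝ :=
  (1 / (1 - α)) * Real.log (Amom α ρ) - ((1 - 2*α)/(1 - α)) * S2 ρ

/-- The stabilizer norm `D(ρ) = A_{1/2}(ρ) = 2^{-n} ∑_P |tr(ρP)|`. -/
def Dnorm {n : ℕ} (ρ : Matrix (QIdx n) (QIdx n) ℂ) : ℝ :=
  Amom (1/2) ρ

/-- A Clifford unitary: unitary mapping every Pauli string to `±` a Pauli string. -/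
def IsCliffordUnitary {n : ℕ} (U : Matrix (QIdx n) (QIdx n) ℂ) : Prop :=
  U ∈ Matrix.unitaryGroup (QIdx n) ℂ ∧
    ∀ a : Fin n → Fin 4, ∃ (b : Fin n → Fin 4) (ε : ℝ),
      (ε = 1 ∨ ε = -1) ∧ U * pauliString a * Uᴴ = (ε : ℂ) • pauliString b

/-- The computational all-zeros basis vector `|0⟩^{⊗n}`. -/
def zeroVec (n : ℕ) : QIdx n → ℂ :=
  fun i => if (∀ k, i k = 0) then 1 else 0

/-- A pure stabilizer state vector: `U|0⟩^{⊗n}` for a Clifford unitary `U`. -/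
def IsPureStab {n : ℕ} (ψ : QIdx n → ℂ) : Prop :=
  ∃ U, IsCliffordUnitary U ∧ ψ = U.mulVec (zeroVec n)

/-- The rank-one projector `|ψ⟩⟨ψ|`. -/
def proj {n : ℕ} (ψ : QIdx n → ℂ) : Matrix (QIdx n) (QIdx n) ℂ :=
  Matrix.vecMulVec ψ (star ψ)

/-- A mixed stabilizer state: a finite convex combination of pure stabilizer projectors. -/
def IsMixedStab {n : ℕ} (ρ : Matrix (QIdx n) (QIdx n) ℂ) : Prop :=
  ∃ (k : ℕ) (p : Fin k → ℝ) (ψ : Fin k → QIdx n → ℂ),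
    (∀ i, 0 ≤ p i) ∧ (∑ i, p i = 1) ∧ (∀ i, IsPureStab (ψ i)) ∧
    ρ = ∑ i, (p i : ℂ) • proj (ψ i)

/-- The set of values `ln ∑ᵢ |xᵢ|` over finite real stabilizer decompositions of `ρ`. -/
def StabDecomps {n : ℕ} (ρ : Matrix (QIdx n) (QIdx n) ℂ) : Set ℝ :=
  { r | ∃ (k : ℕ) (x : Fin k → ℝ) (ψ : Fin k → QIdx n → ℂ),
      (∀ i, IsPureStab (ψ i)) ∧ ρ = ∑ i, (x i : ℂ) • proj (ψ i) ∧
      r = Real.log (∑ i, |x i|) }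

/-- The log-free robustness of magic. -/
def LR {n : ℕ} (ρ : Matrix (QIdx n) (QIdx n) ℂ) : ℝ := sInf (StabDecomps ρ)

open Classical in
/-- Positive-semidefinite square root (junk value `0` off the PSD cone). -/
def psdSqrt {n : ℕ} (A : Matrix (QIdx n) (QIdx n) ℂ) : Matrix (QIdx n) (QIdx n) ℂ :=
  if h : A.PosSemidef then
    (h.1.eigenvectorUnitary : Matrix (QIdx n) (QIdx n) ℂ) *
      diagonal ((↑) ∘ (√·) ∘ h.1.eigenvalues) *
      (star h.1.eigenvectorUnitary : Matrix (QIdx n) (QIdx n) ℂ)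
  else 0

/-- The Uhlmann fidelity `F(ρ,σ) = (tr √(√ρ σ √ρ))²`. -/
def fidelity {n : ℕ} (ρ σ : Matrix (QIdx n) (QIdx n) ℂ) : ℝ :=
  ((psdSqrt (psdSqrt ρ * σ * psdSqrt ρ)).trace.re) ^ 2

/-- The stabilizer fidelity `D_F(ρ) = inf { -ln F(ρ,σ) : σ a mixed stabilizer state }`. -/
def DF {n : ℕ} (ρ : Matrix (QIdx n) (QIdx n) ℂ) : ℝ :=
  sInf { r | ∃ σ, IsMixedStab σ ∧ r = - Real.log (fidelity ρ σ) }

/-- Filtered Pauli moment `Ã_α(ρ) = (2^n A_α(ρ) - 1)/(2^n - 1)`. -/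
def Atil {n : ℕ} (α : ℝ) (ρ : Matrix (QIdx n) (QIdx n) ℂ) : ℝ :=
  ((2:ℝ)^n * Amom α ρ - 1) / ((2:ℝ)^n - 1)

/-- Filtered stabilizer norm `D̃(ρ) = (2^n D(ρ) - 1)/(2^n - 1)`. -/
def Dtil {n : ℕ} (ρ : Matrix (QIdx n) (QIdx n) ℂ) : ℝ :=
  ((2:ℝ)^n * Dnorm ρ - 1) / ((2:ℝ)^n - 1)

/-- Filtered magic witness `W̃_α(ρ) = (1/(1-α)) ln Ã_α(ρ) + ((1-2α)/(1-α)) ln Ã₁(ρ)`. -/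
def Wtil {n : ℕ} (α : ℝ) (ρ : Matrix (QIdx n) (QIdx n) ℂ) : ℝ :=
  (1/(1-α)) * Real.log (Atil α ρ) + ((1 - 2*α)/(1-α)) * Real.log (Atil 1 ρ)

/-- The maximally mixed state `I/2^n`. -/
def maxMixed (n : ℕ) : Matrix (QIdx n) (QIdx n) ℂ := ((2:ℂ)^n)⁻¹ • 1

/-- The single-qubit T-state vector `|T⟩ = (|0⟩ + e^{-iπ/4}|1⟩)/√2`. -/
def Tket : QIdx 1 → ℂ :=
  fun i => if i 0 = 0 then (Real.sqrt 2 : ℂ)⁻¹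
           else Complex.exp (-(Real.pi/4 : ℂ) * Complex.I) * (Real.sqrt 2 : ℂ)⁻¹

/-- The depolarized T-state `ρ_p = (1-p)|T⟩⟨T| + p·I₂/2`. -/
def rhoDep (p : ℝ) : Matrix (QIdx 1) (QIdx 1) ℂ :=
  ((1 - p : ℝ) : ℂ) • proj Tket + ((p : ℝ) : ℂ) • (((2:ℂ))⁻¹ • 1)


/-!
The stabilizer norm is convex, since each Pauli coefficient `tr(ρP)` is linear in `ρ`, so it
suffices to show `D(|ψ⟩⟨ψ|) = 1` for a pure stabilizer state `ψ = U|0⟩`. Conjugation by a Clifford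
`U` permutes the Pauli strings up to sign: the induced map on strings is injective because distinct
Pauli strings are trace-orthogonal, hence never proportional. So `D` is Clifford invariant, and
`D(|0⟩⟨0|) = 2⁻ⁿ ∑_P |P₀₀| = 1`, the entry `P₀₀` being `1` on `{I, Z}ⁿ` and `0` otherwise.
-/
lemma trace_pauliMat_mul_pauliMat (a b : Fin 4) :
    (pauliMat a * pauliMat b).trace = if a = b then 2 else 0 := by
  fin_cases a <;> fin_cases b <;>
    simp [pauliMat, Matrix.trace, Fin.sum_univ_two, Complex.ext_iff] <;> norm_num

lemma trace_pauliString_mul_pauliString {n : ℕ} (a b : Fin n → Fin 4) :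
    (pauliString a * pauliString b).trace = ∏ k, (pauliMat (a k) * pauliMat (b k)).trace := by
  simp only [Matrix.trace, Matrix.diag, Matrix.mul_apply, pauliString, ← Finset.prod_mul_distrib,
    Fintype.prod_sum]

lemma eq_of_pauliString_eq_smul {n : ℕ} {a b : Fin n → Fin 4} {c : ℂ}
    (h : pauliString a = c • pauliString b) : a = b := by
  have hself : (pauliString a * pauliString a).trace ≠ 0 := by
    simp [trace_pauliString_mul_pauliString, trace_pauliMat_mul_pauliMat]
  funext k
  by_contra hk
  apply hself
  nth_rw 2 [h]
  rw [Matrix.mul_smul, Matrix.trace_smul, trace_pauliString_mul_pauliString,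
    Finset.prod_eq_zero (Finset.mem_univ k) (by simp [trace_pauliMat_mul_pauliMat, hk]), smul_zero]

lemma Dnorm_eq {n : ℕ} (ρ : Matrix (QIdx n) (QIdx n) ℂ) :
    Dnorm ρ = ((2:ℝ)^n)⁻¹ * ∑ a : Fin n → Fin 4, ‖(ρ * pauliString a).trace‖ := by
  simp [Dnorm, Amom]

lemma Dnorm_nonneg {n : ℕ} (ρ : Matrix (QIdx n) (QIdx n) ℂ) : 0 ≤ Dnorm ρ := by
  rw [Dnorm_eq]; positivity

lemma Dnorm_sum_smul_le {n : ℕ} {ι : Type*} [Fintype ι] {p : ι → ℝ} (hp : ∀ i, 0 ≤ p i)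
    (σ : ι → Matrix (QIdx n) (QIdx n) ℂ) :
    Dnorm (∑ i, (p i : ℂ) • σ i) ≤ ∑ i, p i * Dnorm (σ i) := by
  have htri (a : Fin n → Fin 4) : ‖((∑ i, (p i : ℂ) • σ i) * pauliString a).trace‖
      ≤ ∑ i, p i * ‖(σ i * pauliString a).trace‖ := by
    simp only [Finset.sum_mul, Matrix.smul_mul, Matrix.trace_sum, Matrix.trace_smul]
    refine (norm_sum_le _ _).trans_eq (Finset.sum_congr rfl fun i _ => ?_)
    rw [norm_smul, Complex.norm_of_nonneg (hp i)]
  calc Dnorm (∑ i, (p i : ℂ) • σ i)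
      ≤ ((2:ℝ)^n)⁻¹ * ∑ a : Fin n → Fin 4, ∑ i, p i * ‖(σ i * pauliString a).trace‖ := by
        rw [Dnorm_eq]; gcongr with a; exact htri a
    _ = ∑ i, p i * Dnorm (σ i) := by
        simp only [Dnorm_eq, Finset.mul_sum]
        rw [Finset.sum_comm]
        exact Finset.sum_congr rfl fun i _ => Finset.sum_congr rfl fun a _ => by ring

lemma proj_mulVec {n : ℕ} (U : Matrix (QIdx n) (QIdx n) ℂ) (x : QIdx n → ℂ) :
    proj (U *ᵥ x) = U * proj x * Uᴴ := by
  rw [proj, proj, Matrix.vecMulVec_eq Unit, Matrix.vecMulVec_eq Unit,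
    Matrix.star_mulVec, Matrix.replicateCol_mulVec, Matrix.replicateRow_vecMul]
  simp only [Matrix.mul_assoc]

lemma trace_proj_zeroVec_mul {n : ℕ} (M : Matrix (QIdx n) (QIdx n) ℂ) :
    (proj (zeroVec n) * M).trace = M 0 0 := by
  have hz : zeroVec n = Pi.single 0 1 := by
    funext i
    simp [zeroVec, Pi.single_apply, funext_iff]
  simp [hz, proj, Matrix.trace, Matrix.mul_apply, Matrix.vecMulVec, Pi.single_apply]

lemma Dnorm_proj_zeroVec (n : ℕ) : Dnorm (proj (zeroVec n)) = 1 := by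
  have h4 : ∑ c : Fin 4, ‖pauliMat c 0 0‖ = 2 := by
    simp [Fin.sum_univ_four, pauliMat]; norm_num
  have hentry (a : Fin n → Fin 4) : ‖pauliString a 0 0‖ = ∏ k, ‖pauliMat (a k) 0 0‖ :=
    norm_prod _ _
  rw [Dnorm_eq]
  simp_rw [trace_proj_zeroVec_mul, hentry]
  rw [← Fintype.prod_sum (fun _ c => ‖pauliMat c 0 0‖), Finset.prod_const, h4, Finset.card_univ,
    Fintype.card_fin]
  exact inv_mul_cancel₀ (by positivity)

section UnitaryConjugation

variable {m : Type*} [Fintype m] [DecidableEq m] {U : Matrix m m ℂ}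

lemma conj_mul_conj (hU : Uᴴ * U = 1) (X Y : Matrix m m ℂ) :
    U * X * Uᴴ * (U * Y * Uᴴ) = U * (X * Y) * Uᴴ := by
  simp only [Matrix.mul_assoc, ← Matrix.mul_assoc Uᴴ U, hU, Matrix.one_mul]

lemma trace_conj (hU : Uᴴ * U = 1) (X : Matrix m m ℂ) : (U * X * Uᴴ).trace = X.trace := by
  rw [Matrix.trace_mul_cycle, hU, Matrix.one_mul]

lemma mul_mul_conjTranspose_injective (hU : Uᴴ * U = 1) : Function.Injective fun X : Matrix m m ℂ => U * X * Uᴴ := by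
  intro X Y h
  simpa only [Matrix.mul_assoc, ← Matrix.mul_assoc Uᴴ U, hU, Matrix.one_mul, Matrix.mul_one]
    using congrArg (fun Z => Uᴴ * Z * U) h

end UnitaryConjugation

namespace IsCliffordUnitary

variable {n : ℕ} {U : Matrix (QIdx n) (QIdx n) ℂ}

lemma conjTranspose_mul_self (hU : IsCliffordUnitary U) : Uᴴ * U = 1 := hU.1.1

lemma exists_bijective_conj_pauliString (hU : IsCliffordUnitary U) :
    ∃ (b : (Fin n → Fin 4) → Fin n → Fin 4) (ε : (Fin n → Fin 4) → ℂ), Function.Bijective b ∧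
      ∀ a, ‖ε a‖ = 1 ∧ pauliString (b a) = ε a • (U * pauliString a * Uᴴ) := by
  choose b ε hε hconj using hU.2
  have hεsq (a) : (ε a : ℂ) * ε a = 1 := by rcases hε a with h | h <;> simp [h]
  have hpauli (a) : pauliString (b a) = (ε a : ℂ) • (U * pauliString a * Uᴴ) := by
    rw [hconj, smul_smul, hεsq, one_smul]
  refine ⟨b, fun a => ε a, Finite.injective_iff_bijective.mp fun a₁ a₂ h => ?_,
    fun a => ⟨by rcases hε a with h | h <;> simp [h], hpauli a⟩⟩
  refine eq_of_pauliString_eq_smul (c := ε a₁ * ε a₂) (mul_mul_conjTranspose_injective hU.conjTranspose_mul_self ?_)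
  simp only [Matrix.mul_smul, Matrix.smul_mul, hconj, h, smul_smul]
  rw [mul_assoc, hεsq, mul_one]

lemma Dnorm_conj (hU : IsCliffordUnitary U) (ρ : Matrix (QIdx n) (QIdx n) ℂ) :
    Dnorm (U * ρ * Uᴴ) = Dnorm ρ := by
  obtain ⟨b, ε, hb, hε⟩ := hU.exists_bijective_conj_pauliString
  have hterm (a) : ‖(U * ρ * Uᴴ * pauliString (b a)).trace‖ = ‖(ρ * pauliString a).trace‖ := by
    rw [(hε a).2, Matrix.mul_smul, conj_mul_conj hU.conjTranspose_mul_self, Matrix.trace_smul,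
      trace_conj hU.conjTranspose_mul_self, norm_smul, (hε a).1, one_mul]
  rw [Dnorm_eq, Dnorm_eq, ← Fintype.sum_bijective b hb _ _ fun a => rfl]
  simp only [hterm]

end IsCliffordUnitary

lemma IsPureStab.Dnorm_proj {n : ℕ} {ψ : QIdx n → ℂ} (hψ : IsPureStab ψ) : Dnorm (proj ψ) = 1 := by
  obtain ⟨U, hU, rfl⟩ := hψ
  rw [proj_mulVec, hU.Dnorm_conj, Dnorm_proj_zeroVec]

/-- every mixed stabilizer state has stabilizer norm at most one,
i.e. `D(ρ_C) ≤ 1` and `ln D(ρ_C) ≤ 0`. -/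
theorem stabNorm_le_one_of_mixedStab {n : ℕ} (ρ : Matrix (QIdx n) (QIdx n) ℂ)
    (hρ : IsMixedStab ρ) :
    Dnorm ρ ≤ 1 ∧ Real.log (Dnorm ρ) ≤ 0 := by
  obtain ⟨k, p, ψ, hp, hp_sum, hψ, rfl⟩ := hρ
  have hD : Dnorm (∑ i, (p i : ℂ) • proj (ψ i)) ≤ 1 :=
    calc _ ≤ ∑ i, p i * Dnorm (proj (ψ i)) := Dnorm_sum_smul_le hp _
      _ = 1 := by simp only [fun i => (hψ i).Dnorm_proj, mul_one, hp_sum]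
  exact ⟨hD, Real.log_nonpos (Dnorm_nonneg _) hD⟩
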